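/- arXiv:2105.04058 — 4 statements merged into one kernel-verified Lean document; each statement's English description precedes it below -/
import Mathlib

section
/- Let n ≥ 2, r ≥ 2 and m > r be integers, let d > 0 and A > 0, and let ψ : ℝⁿ → ℝ be a C^r function with 0 ≤ ψ ≤ 1 such that |∇^j ψ(x)| ≤ A·d^{−j} for all x and all 1 ≤ j ≤ r. Then there exists a constant C = C(n, r, m, A) > 0 such that for every 1 ≤ k ≤ r and every x ∈ ℝⁿ, |∇^k(ψ^m)(x)| ≤ C·d^{−k}·ψ(x)^{m−k}. -/
/-!
By the Leibniz rule, if `‖D^k f‖ ≤ C δ^k ψ^(p-k)` and `‖D^k g‖ ≤ C' δ^k ψ^(q-k)` for `k ≤ r`, then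
`‖D^k (f g)‖ ≤ 2^r C C' δ^k ψ^(p+q-k)`, because `0 ≤ ψ ≤ 1` and `(p-i) + (q-(k-i)) ≥ p+q-k`.
The hypotheses give such a bound for `ψ` itself with `p = 1`, `δ = d⁻¹` and constant `max A 1`,
so induction on `m` gives the bound for `ψ^m` with constant `(2^r max A 1)^m`.
-/

open MeasureTheory Metric Set
open scoped BigOperators RealInnerProductSpace Topology

noncomputable section

abbrev Euc (n : ℕ) := EuclideanSpace ℝ (Fin n)

/-- `D^j u` : the partial derivative of `u` corresponding to the multi-index `j`. -/
noncomputable def multiDeriv (n : ℕ) (u : Euc n → ℝ) (j : Fin n → ℕ) (x : Euc n) : ℝ :=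
  iteratedFDeriv ℝ (∑ i, j i) u x
    (fun k => ((List.finRange n).flatMap
        (fun i => List.replicate (j i) ((EuclideanSpace.single i (1:ℝ) : Euc n)))).getD k.val 0)

/-- `(Σ_{|j|=s} |D^j u|^p)^{1/p}`, the ℓ^p magnitude of the s-th order partial derivatives. -/
noncomputable def gradMag (n : ℕ) (p : ℝ) (s : ℕ) (u : Euc n → ℝ) (x : Euc n) : ℝ :=
  (∑ j ∈ Finset.Nat.antidiagonalTuple n s, |multiDeriv n u j x| ^ p) ^ (1/p)

/-- The Laplacian. -/
noncomputable def lap (n : ℕ) (u : Euc n → ℝ) : Euc n → ℝ :=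
  fun x => ∑ i : Fin n, iteratedFDeriv ℝ 2 u x (fun _ => EuclideanSpace.single i (1:ℝ))

/-- Iterated Laplacian `Δ^j u`. -/
noncomputable def lapIter (n : ℕ) : ℕ → (Euc n → ℝ) → (Euc n → ℝ)
  | 0, u => u
  | (j+1), u => lap n (lapIter n j u)

/-- `D_r u · D_r v` where `D_r u = Δ^{r/2} u` (r even) or `∇ Δ^{(r-1)/2} u` (r odd). -/
noncomputable def DrDot (n r : ℕ) (u v : Euc n → ℝ) (x : Euc n) : ℝ :=
  if r % 2 = 0 then lapIter n (r/2) u x * lapIter n (r/2) v x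
  else (inner ℝ (gradient (lapIter n (r/2) u) x) (gradient (lapIter n (r/2) v) x) : ℝ)

/-- The exponent `p - k` is truncated: the weight `ψ` drops out of the bound once `k ≥ p`. -/
def DerivBoundedByPow {E : Type*} [NormedAddCommGroup E] [NormedSpace ℝ E]
    (r : ℕ) (δ : ℝ) (ψ : E → ℝ) (p : ℕ) (C : ℝ) (f : E → ℝ) : Prop :=
  ∀ k ≤ r, ∀ x, ‖iteratedFDeriv ℝ k f x‖ ≤ C * δ ^ k * ψ x ^ (p - k)

namespace DerivBoundedByPow

variable {E : Type*} [NormedAddCommGroup E] [NormedSpace ℝ E] {r : ℕ} {δ : ℝ} {ψ : E → ℝ}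

theorem one (hδ : 0 ≤ δ) : DerivBoundedByPow r δ ψ 0 1 (fun _ => 1) := by
  intro k _ x
  rcases Nat.eq_zero_or_pos k with rfl | hk
  · simp
  · rw [iteratedFDeriv_const_of_ne hk.ne', Pi.zero_apply, norm_zero, Nat.zero_sub, pow_zero]
    positivity

theorem self {A : ℝ} (hA : 1 ≤ A) (hψ₀ : ∀ x, 0 ≤ ψ x)
    (hbound : ∀ j : ℕ, 1 ≤ j → j ≤ r → ∀ x, ‖iteratedFDeriv ℝ j ψ x‖ ≤ A * δ ^ j) :
    DerivBoundedByPow r δ ψ 1 A ψ := by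
  intro k hk x
  rcases Nat.eq_zero_or_pos k with rfl | hk₀
  · rw [norm_iteratedFDeriv_zero, Real.norm_of_nonneg (hψ₀ x), pow_zero, mul_one, pow_one]
    exact le_mul_of_one_le_left (hψ₀ x) hA
  · simpa [Nat.sub_eq_zero_of_le hk₀] using hbound k hk₀ hk x

theorem mul {p q : ℕ} {C C' : ℝ} {f g : E → ℝ} (hδ : 0 ≤ δ)
    (hψ : ∀ x, 0 ≤ ψ x ∧ ψ x ≤ 1) (hC : 0 ≤ C) (hC' : 0 ≤ C')
    (hf : ContDiff ℝ r f) (hg : ContDiff ℝ r g)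
    (hfb : DerivBoundedByPow r δ ψ p C f) (hgb : DerivBoundedByPow r δ ψ q C' g) :
    DerivBoundedByPow r δ ψ (p + q) (2 ^ r * (C * C')) (fun x => f x * g x) := by
  intro k hk x
  obtain ⟨hψ₀, hψ₁⟩ := hψ x
  have hterm : ∀ i ∈ Finset.range (k + 1),
      (k.choose i : ℝ) * ‖iteratedFDeriv ℝ i f x‖ * ‖iteratedFDeriv ℝ (k - i) g x‖ ≤
        k.choose i * (C * C' * δ ^ k * ψ x ^ (p + q - k)) := by
    intro i hi
    have hik : i ≤ k := Nat.lt_succ_iff.mp (Finset.mem_range.mp hi)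
    have hfi := hfb i (hik.trans hk) x
    have hgi := hgb (k - i) ((Nat.sub_le k i).trans hk) x
    rw [mul_assoc]
    refine mul_le_mul_of_nonneg_left ?_ (Nat.cast_nonneg _)
    calc ‖iteratedFDeriv ℝ i f x‖ * ‖iteratedFDeriv ℝ (k - i) g x‖
        ≤ (C * δ ^ i * ψ x ^ (p - i)) * (C' * δ ^ (k - i) * ψ x ^ (q - (k - i))) :=
          mul_le_mul hfi hgi (norm_nonneg _) ((norm_nonneg _).trans hfi)
      _ = C * C' * δ ^ k * ψ x ^ (p - i + (q - (k - i))) := by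
          rw [pow_add, ← Nat.add_sub_of_le hik, pow_add, Nat.add_sub_cancel_left]; ring
      _ ≤ C * C' * δ ^ k * ψ x ^ (p + q - k) := by
          have : 0 ≤ C * C' * δ ^ k := by positivity
          exact mul_le_mul_of_nonneg_left (pow_le_pow_of_le_one hψ₀ hψ₁ (by omega)) this
  calc ‖iteratedFDeriv ℝ k (fun x => f x * g x) x‖
      ≤ ∑ i ∈ Finset.range (k + 1),
          (k.choose i : ℝ) * ‖iteratedFDeriv ℝ i f x‖ * ‖iteratedFDeriv ℝ (k - i) g x‖ :=
        norm_iteratedFDeriv_mul_le hf hg x (by exact_mod_cast hk)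
    _ ≤ ∑ i ∈ Finset.range (k + 1), k.choose i * (C * C' * δ ^ k * ψ x ^ (p + q - k)) :=
        Finset.sum_le_sum hterm
    _ = 2 ^ k * (C * C' * δ ^ k * ψ x ^ (p + q - k)) := by
        rw [← Finset.sum_mul, ← Nat.cast_sum, Nat.sum_range_choose, Nat.cast_pow, Nat.cast_two]
    _ ≤ 2 ^ r * (C * C' * δ ^ k * ψ x ^ (p + q - k)) := by
        gcongr
        norm_num
    _ = 2 ^ r * (C * C') * δ ^ k * ψ x ^ (p + q - k) := by ring

theorem pow {A : ℝ} (hA : 1 ≤ A) (hδ : 0 ≤ δ) (hψ : ∀ x, 0 ≤ ψ x ∧ ψ x ≤ 1)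
    (hψr : ContDiff ℝ r ψ) (hself : DerivBoundedByPow r δ ψ 1 A ψ) (m : ℕ) :
    DerivBoundedByPow r δ ψ m ((2 ^ r * A) ^ m) (fun x => ψ x ^ m) := by
  induction m with
  | zero => simpa using one (r := r) (ψ := ψ) hδ
  | succ m ih =>
    have h := ih.mul hδ hψ (by positivity) (by positivity) (hψr.pow m) hψr hself
    simpa only [pow_succ, mul_comm, mul_left_comm, mul_assoc] using h

end DerivBoundedByPow

theorem statement1_general (n r m : ℕ)
    (d A : ℝ) (hd : 0 < d)
    (ψ : Euc n → ℝ) (hψ : ContDiff ℝ (r : ℕ∞) ψ)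
    (hψ01 : ∀ x, 0 ≤ ψ x ∧ ψ x ≤ 1)
    (hψgrad : ∀ j : ℕ, 1 ≤ j → j ≤ r → ∀ x,
      ‖iteratedFDeriv ℝ j ψ x‖ ≤ A * d ^ (-(j : ℝ))) :
    ∃ C > 0, ∀ k : ℕ, 1 ≤ k → k ≤ r → ∀ x,
      ‖iteratedFDeriv ℝ k (fun z => ψ z ^ m) x‖ ≤ C * d ^ (-(k : ℝ)) * ψ x ^ (m - k) := by
  have hscale : ∀ j : ℕ, d ^ (-(j : ℝ)) = d⁻¹ ^ j := fun j => by
    rw [Real.rpow_neg hd.le, Real.rpow_natCast, inv_pow]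
  have hself : DerivBoundedByPow r d⁻¹ ψ 1 (max A 1) ψ :=
    .self (le_max_right A 1) (fun x => (hψ01 x).1) fun j hj hjr x =>
      (hψgrad j hj hjr x).trans (by rw [hscale]; gcongr; exact le_max_left A 1)
  have hpow := DerivBoundedByPow.pow (le_max_right A 1) (by positivity) hψ01 hψ hself m
  refine ⟨(2 ^ r * max A 1) ^ m, by positivity, fun k _ hk x => ?_⟩
  rw [hscale]
  exact hpow k hk x

/-- Gradient bound for powers of a cut-off function: if `0 ≤ ψ ≤ 1` is `C^r` with
`|∇^j ψ| ≤ A d^{-j}` for `1 ≤ j ≤ r`, then for `m > r` there is `C = C(n,r,m,A) > 0` with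
`|∇^k (ψ^m)| ≤ C d^{-k} ψ^{m-k}` for all `1 ≤ k ≤ r`. -/
theorem statement1 (n r m : ℕ) (hn : 2 ≤ n) (hr : 2 ≤ r) (hm : r < m)
    (d A : ℝ) (hd : 0 < d) (hA : 0 < A)
    (ψ : Euc n → ℝ) (hψ : ContDiff ℝ (r : ℕ∞) ψ)
    (hψ01 : ∀ x, 0 ≤ ψ x ∧ ψ x ≤ 1)
    (hψgrad : ∀ j : ℕ, 1 ≤ j → j ≤ r → ∀ x,
      ‖iteratedFDeriv ℝ j ψ x‖ ≤ A * d ^ (-(j : ℝ))) :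
    ∃ C > 0, ∀ k : ℕ, 1 ≤ k → k ≤ r → ∀ x,
      ‖iteratedFDeriv ℝ k (fun z => ψ z ^ m) x‖ ≤ C * d ^ (-(k : ℝ)) * ψ x ^ (m - k) :=
  statement1_general n r m d A hd ψ hψ hψ01 hψgrad
end
end

section
/- Let r ≥ 2 be an integer, p ≥ 2 real, and C > 0. Suppose I_0, I_1, …, I_r are nonnegative real numbers such that for every ε ∈ (0,1) and every integer 1 ≤ q ≤ r−1 one has I_q ≤ C·ε^{1−p}·I_{q−1} + ε·I_{q+1}. Then there exists a constant C' > 0, depending only on C, p and r, such that for every ε ∈ (0,1) and every integer 1 ≤ q ≤ r−1: I_q ≤ C'·ε^{1−p^r}·I_0 + ε·I_r. -/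
/-! Going up, `I_q ≤ K ε^(1-p^q) I_0 + ε I_(q+1)` by induction on `q`: apply the recurrence at
`ε/2` and the previous bound at `η = ε^(p-1) / (2^p C)` (with `C ≥ 1`, so that `η < 1`), chosen
so that the `I_q` term this produces has coefficient `1/2` and can be absorbed into the left-hand
side; the exponent gets multiplied by `p`. Going down from `q = r - 1`, substituting the bound for
`I_(q+1)` into the one for `I_q` and using `ε < 1` replaces `I_(q+1)` by `I_r`.
All bounds are monotone in the constant `K`, so they are stated for all large `K`
(`∀ᶠ K in atTop`), which lets finitely many of them be combined. -/

open Filter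

theorem rpow_one_sub_pow_le {ε p : ℝ} {m n : ℕ} (hε0 : 0 < ε) (hε1 : ε ≤ 1) (hp : 1 ≤ p)
    (hmn : m ≤ n) : ε ^ (1 - p ^ m) ≤ ε ^ (1 - p ^ n) :=
  Real.rpow_le_rpow_of_exponent_ge hε0 hε1 (by linarith [pow_le_pow_right₀ hp hmn])

theorem interpolation_absorb {p C s K a b c d : ℝ} (hp : 1 ≤ p) (hC : 1 ≤ C) (hs : 1 ≤ s) (hK : 0 ≤ K)
    (hd : 0 ≤ d)
    (ha : ∀ ε, 0 < ε → ε < 1 → a ≤ C * ε ^ (1 - p) * b + ε * c)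
    (hb : ∀ η, 0 < η → η < 1 → b ≤ K * η ^ (1 - s) * d + η * a) :
    ∀ ε, 0 < ε → ε < 1 → a ≤ K * (2 ^ p * C) ^ s * ε ^ (1 - p * s) * d + ε * c := by
  intro ε hε0 hε1
  set L := 2 ^ p * C with hL
  set t := ε ^ (p - 1)
  have ht0 : 0 < t := by positivity
  have ht1 : t ≤ 1 := Real.rpow_le_one hε0.le hε1.le (by linarith)
  have h2p : (2 : ℝ) ^ p = 2 * 2 ^ (p - 1) := by
    rw [Real.rpow_sub_one two_ne_zero]; ring
  have hL1 : 2 ≤ L := by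
    have : (2 : ℝ) ≤ 2 ^ p := by simpa using Real.rpow_le_rpow_of_exponent_le one_le_two hp
    nlinarith
  have hη0 : 0 < t / L := by positivity
  have hη1 : t / L < 1 := by rw [div_lt_one (by positivity)]; linarith
  have hδ : (ε / 2) ^ (1 - p) = 2 ^ (p - 1) / t := by
    rw [show 1 - p = -(p - 1) by ring, Real.rpow_neg (by positivity),
      Real.div_rpow hε0.le zero_le_two, inv_div]
  have hηs : (t / L) ^ (1 - s) = t / L * L ^ s / t ^ s := by
    rw [Real.rpow_sub hη0, Real.rpow_one, Real.div_rpow ht0.le (by positivity)]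
    field_simp
  have hεs : ε ^ (s - p * s) = (t ^ s)⁻¹ := by
    rw [show s - p * s = (p - 1) * -s by ring, Real.rpow_mul hε0.le, Real.rpow_neg ht0.le]
  have hmono : ε ^ (s - p * s) ≤ ε ^ (1 - p * s) :=
    Real.rpow_le_rpow_of_exponent_ge hε0 hε1.le (by linarith)
  have hah := ha (ε / 2) (by positivity) (by linarith)
  have hbη := hb (t / L) hη0 hη1
  rw [hδ] at hah
  rw [hηs] at hbη
  have hA : C * (2 ^ (p - 1) / t) * (t / L) = 1 / 2 := by
    rw [hL, h2p]; field_simp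
  have hB : C * (2 ^ (p - 1) / t) * (t / L * L ^ s / t ^ s) = L ^ s * ε ^ (s - p * s) / 2 := by
    rw [hεs, hL, h2p]; field_simp
  have hsharp : a ≤ K * L ^ s * ε ^ (s - p * s) * d + ε * c := by
    have := mul_le_mul_of_nonneg_left hbη (by positivity : 0 ≤ C * (2 ^ (p - 1) / t))
    linear_combination 2 * hah + 2 * this + 2 * (K * d) * hB + 2 * a * hA
  have := mul_le_mul_of_nonneg_right
    (mul_le_mul_of_nonneg_left hmono (by positivity : 0 ≤ K * L ^ s)) hd
  linarith

theorem eventually_atTop_of_exists_interp_bound {s a c d : ℝ} (hd : 0 ≤ d)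
    (h : ∃ K, ∀ ε, 0 < ε → ε < 1 → a ≤ K * ε ^ (1 - s) * d + ε * c) :
    ∀ᶠ K in atTop, ∀ ε, 0 < ε → ε < 1 → a ≤ K * ε ^ (1 - s) * d + ε * c := by
  obtain ⟨K, hK⟩ := h
  filter_upwards [eventually_ge_atTop K] with K' hK' ε hε0 hε1
  have := mul_le_mul_of_nonneg_right
    (mul_le_mul_of_nonneg_right hK' (Real.rpow_nonneg hε0.le (1 - s))) hd
  linarith [hK ε hε0 hε1]

section

variable {I : ℕ → ℝ} {r : ℕ} {p : ℝ}

theorem eventually_forward_bound {C : ℝ} (hp : 1 ≤ p) (hC : 1 ≤ C) (hpos : ∀ q ≤ r, 0 ≤ I q)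
    (hrec : ∀ ε, 0 < ε → ε < 1 → ∀ q, 1 ≤ q → q < r →
      I q ≤ C * ε ^ (1 - p) * I (q - 1) + ε * I (q + 1)) :
    ∀ q < r, ∀ᶠ K in atTop, ∀ ε, 0 < ε → ε < 1 →
      I q ≤ K * ε ^ (1 - p ^ q) * I 0 + ε * I (q + 1) := by
  have hI0 : 0 ≤ I 0 := hpos 0 (Nat.zero_le r)
  intro q hq
  induction q with
  | zero =>
    filter_upwards [eventually_ge_atTop 1] with K hK ε hε0 hε1
    have := mul_nonneg hε0.le (hpos 1 hq)
    simp only [pow_zero, sub_self, Real.rpow_zero, mul_one, zero_add]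
    nlinarith
  | succ q ih =>
    obtain ⟨K, hK, hK0⟩ := ((ih (by omega)).and (eventually_ge_atTop 0)).exists
    have step := interpolation_absorb hp hC (one_le_pow₀ hp) hK0 hI0
      (fun ε hε0 hε1 => hrec ε hε0 hε1 (q + 1) (by omega) hq) hK
    rw [← pow_succ'] at step
    exact eventually_atTop_of_exists_interp_bound hI0 ⟨_, step⟩

theorem eventually_backward_bound (hp : 1 ≤ p) (hpos : ∀ q ≤ r, 0 ≤ I q)
    (hfwd : ∀ q < r, ∀ᶠ K in atTop, ∀ ε, 0 < ε → ε < 1 →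
      I q ≤ K * ε ^ (1 - p ^ q) * I 0 + ε * I (q + 1)) :
    ∀ q < r, ∀ᶠ K in atTop, ∀ ε, 0 < ε → ε < 1 →
      I q ≤ K * ε ^ (1 - p ^ r) * I 0 + ε * I r := by
  have hI0 : 0 ≤ I 0 := hpos 0 (Nat.zero_le r)
  have hIr : 0 ≤ I r := hpos r le_rfl
  intro q hq
  induction Nat.le_sub_one_of_lt hq using Nat.decreasingInduction with
  | self =>
    filter_upwards [hfwd (r - 1) (by omega), eventually_ge_atTop 0] with K hK hK0 ε hε0 hε1
    have hmono := rpow_one_sub_pow_le hε0 hε1.le hp (Nat.sub_le r 1)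
    have := mul_le_mul_of_nonneg_right (mul_le_mul_of_nonneg_left hmono hK0) hI0
    rw [Nat.sub_add_cancel (by omega)] at hK
    linarith [hK ε hε0 hε1]
  | of_succ k hk ih =>
    obtain ⟨K, ⟨hfwdk, hbwdk1⟩, hK0⟩ :=
      (((hfwd k (by omega)).and (ih (by omega))).and (eventually_ge_atTop 0)).exists
    refine eventually_atTop_of_exists_interp_bound hI0 ⟨K + K, fun ε hε0 hε1 => ?_⟩
    have hmono := rpow_one_sub_pow_le hε0 hε1.le hp (by omega : k ≤ r)
    have hk := hfwdk ε hε0 hε1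
    have hk1 := hbwdk1 ε hε0 hε1
    have hx : 0 ≤ K * ε ^ (1 - p ^ r) * I 0 := by positivity
    have := mul_le_mul_of_nonneg_right (mul_le_mul_of_nonneg_left hmono hK0) hI0
    nlinarith [mul_le_mul_of_nonneg_left hk1 hε0.le, mul_le_mul_of_nonneg_right hε1.le hx,
      mul_le_mul_of_nonneg_right hε1.le (mul_nonneg hε0.le hIr)]

end

theorem statement7_general (r : ℕ) (p C : ℝ) (hp : 2 ≤ p)
    (I : ℕ → ℝ) (hpos : ∀ q ≤ r, 0 ≤ I q)
    (hrec : ∀ ε : ℝ, 0 < ε → ε < 1 → ∀ q : ℕ, 1 ≤ q → q ≤ r - 1 →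
      I q ≤ C * ε ^ (1 - p) * I (q - 1) + ε * I (q + 1)) :
    ∃ C' > 0, ∀ ε : ℝ, 0 < ε → ε < 1 → ∀ q : ℕ, 1 ≤ q → q ≤ r - 1 →
      I q ≤ C' * ε ^ (1 - p ^ r) * I 0 + ε * I r := by
  have hp1 : 1 ≤ p := by linarith
  have hrec₁ : ∀ ε, 0 < ε → ε < 1 → ∀ q, 1 ≤ q → q < r →
      I q ≤ max C 1 * ε ^ (1 - p) * I (q - 1) + ε * I (q + 1) := by
    intro ε hε0 hε1 q hq1 hq
    have := mul_le_mul_of_nonneg_right (mul_le_mul_of_nonneg_right (le_max_left C 1)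
      (Real.rpow_nonneg hε0.le (1 - p))) (hpos (q - 1) (by omega))
    linarith [hrec ε hε0 hε1 q hq1 (by omega)]
  have hbwd := eventually_backward_bound hp1 hpos
    (eventually_forward_bound hp1 (le_max_right C 1) hpos hrec₁)
  obtain ⟨C', hC', hC'0⟩ :=
    (((Set.finite_Iio r).eventually_all.2 hbwd).and (eventually_gt_atTop 0)).exists
  exact ⟨C', hC'0, fun ε hε0 hε1 q hq1 hq => hC' q (Set.mem_Iio.2 (by omega)) ε hε0 hε1⟩

/-- Abstract iteration lemma (Step 2 of the proof of Lemma 2): if nonnegative reals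
`I_0, …, I_r` satisfy `I_q ≤ C ε^{1-p} I_{q-1} + ε I_{q+1}` for every `ε ∈ (0,1)` and
`1 ≤ q ≤ r-1`, then there is `C' = C'(C,p,r) > 0` with
`I_q ≤ C' ε^{1-p^r} I_0 + ε I_r` for every `ε ∈ (0,1)` and `1 ≤ q ≤ r-1`. -/
theorem statement7 (r : ℕ) (hr : 2 ≤ r) (p C : ℝ) (hp : 2 ≤ p) (hC : 0 < C)
    (I : ℕ → ℝ) (hpos : ∀ q ≤ r, 0 ≤ I q)
    (hrec : ∀ ε : ℝ, 0 < ε → ε < 1 → ∀ q : ℕ, 1 ≤ q → q ≤ r - 1 →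
      I q ≤ C * ε ^ (1 - p) * I (q - 1) + ε * I (q + 1)) :
    ∃ C' > 0, ∀ ε : ℝ, 0 < ε → ε < 1 → ∀ q : ℕ, 1 ≤ q → q ≤ r - 1 →
      I q ≤ C' * ε ^ (1 - p ^ r) * I 0 + ε * I r :=
  statement7_general r p C hp I hpos hrec
end

section
/- Let Ω ⊆ ℝⁿ be open and let f : Ω × ℝ → ℝ be continuous with continuous partial derivative f'(x,s) = ∂f/∂s(x,s). Let s₀ > 0, c₁ > 1 and 1 < p₁ ≤ p₂ be constants, set F(x,s) = ∫₀^s f(x,t) dt, and assume: (h1) f'(x,s)s² ≥ p₁ f(x,s)s for all x ∈ Ω and |s| > s₀; (h2) (p₂+1)F(x,s) ≥ f(x,s)s for all x ∈ Ω and |s| > s₀; (h4) |f'(x,s)| ≤ c₁ for all x ∈ Ω and |s| ≤ s₀, |f(x,0)| ≤ c₁ for all x ∈ Ω, and f(x,s₀) ≥ 1/c₁ and −f(x,−s₀) ≥ 1/c₁ for all x ∈ Ω. Then: (i) there exists C = C(s₀,p₁,p₂,c₁) > 0 such that |f(x,s)|^{(p₂+1)/p₂} ≤ C(|f(x,s)s|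 + 1) for all (x,s) ∈ Ω × ℝ; and (ii) for every real q > 1 there exists C_q > 0 such that |f(x,s)|^{q/p₂} ≤ C_q(|s|^q + 1) for all (x,s) ∈ Ω × ℝ. -/
/-! Near the origin the mean value theorem bounds `|f(x,s)|` by `M = c₁(1 + s₀)`. For `s ≥ s₀`,
(h1) keeps `f(x,s)` positive once `f(x,s₀) > 0`, and (h2) makes `F(x,s) s^{-(p₂+1)}` nonincreasing,
so `0 < f(x,s) ≤ K s^{p₂}` with `K = (p₂+1)M/s₀^{p₂}`; for `s ≤ -s₀` apply this to `s ↦ -f(x,-s)`.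
Both estimates then follow from `|f| ≤ M ∨ |f| ≤ K|s|^{p₂}` by real-power arithmetic. -/

open MeasureTheory Metric Set
open scoped BigOperators RealInnerProductSpace Topology

noncomputable section

theorem abs_le_abs_add_mul_abs_of_abs_deriv_le {g g' : ℝ → ℝ} {r c : ℝ}
    (hg : ∀ s, HasDerivAt g (g' s) s) (hg' : ∀ s, |s| ≤ r → |g' s| ≤ c) {s : ℝ} (hs : |s| ≤ r) :
    |g s| ≤ |g 0| + c * |s| := by
  have hr : 0 ≤ r := (abs_nonneg s).trans hs
  have hmvt := (convex_Icc (-r) r).norm_image_sub_le_of_norm_hasDerivWithin_le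
    (fun t _ => (hg t).hasDerivWithinAt) (fun t ht => hg' t (abs_le.2 ht))
    (⟨neg_nonpos.2 hr, hr⟩ : (0 : ℝ) ∈ Icc (-r) r) (abs_le.1 hs)
  rw [Real.norm_eq_abs, Real.norm_eq_abs, sub_zero] at hmvt
  linarith [abs_sub_abs_le_abs_sub (g s) (g 0)]

theorem pos_of_le_of_deriv_pos_of_pos {g g' : ℝ → ℝ} {a : ℝ} (hg : ∀ s, HasDerivAt g (g' s) s)
    (ha : 0 < g a) (hg' : ∀ s, a < s → 0 < g s → 0 < g' s) {s : ℝ} (hs : a ≤ s) : 0 < g s := by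
  have hfence := image_le_of_deriv_right_lt_deriv_boundary (f := fun _ => g a / 2) (f' := 0)
    (a := a) (b := s) continuousOn_const (fun x _ => hasDerivWithinAt_const _ _ _)
    (by linarith) hg ?_ ⟨hs, le_rfl⟩
  · linarith [hfence]
  · rintro x ⟨hax, -⟩ hx
    have hax : a < x := hax.lt_of_ne (by rintro rfl; linarith)
    exact hg' x hax (by linarith)

theorem le_div_rpow_mul_rpow_of_deriv_mul_le {G G' : ℝ → ℝ} {a p : ℝ} (ha : 0 < a)
    (hG : ∀ s, HasDerivAt G (G' s) s) (h : ∀ s, a < s → G' s * s ≤ p * G s) {s : ℝ}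
    (hs : a ≤ s) : G s ≤ G a / a ^ p * s ^ p := by
  have hd : ∀ x, 0 < x → HasDerivAt (fun s => G s * s ^ (-p))
      (G' x * x ^ (-p) + G x * (-p * x ^ (-p - 1))) x :=
    fun x hx => (hG x).mul (Real.hasDerivAt_rpow_const (Or.inl hx.ne'))
  have hanti : AntitoneOn (fun s => G s * s ^ (-p)) (Ici a) := by
    refine antitoneOn_of_hasDerivWithinAt_nonpos (convex_Ici a)
      (fun x hx => (hd x (ha.trans_le hx)).continuousAt.continuousWithinAt)
      (fun x hx => (hd x (ha.trans (by rwa [interior_Ici] at hx))).hasDerivWithinAt) ?_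
    intro x hx
    rw [interior_Ici] at hx
    have hx0 : 0 < x := ha.trans hx
    have hfactor : G' x * x ^ (-p) + G x * (-p * x ^ (-p - 1))
        = x ^ (-p) / x * (G' x * x - p * G x) := by
      rw [Real.rpow_sub_one hx0.ne']
      field_simp
      ring
    rw [hfactor]
    exact mul_nonpos_of_nonneg_of_nonpos (by positivity) (by linarith [h x hx])
  have hs0 : 0 < s := ha.trans_le hs
  have hle : G s * (s ^ p)⁻¹ ≤ G a * (a ^ p)⁻¹ := by
    simpa only [Real.rpow_neg hs0.le, Real.rpow_neg ha.le] using hanti self_mem_Ici hs hs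
  calc G s = G s * (s ^ p)⁻¹ * s ^ p := by field_simp
    _ ≤ G a * (a ^ p)⁻¹ * s ^ p := by gcongr
    _ = G a / a ^ p * s ^ p := by rw [div_eq_mul_inv]

theorem abs_le_mul_rpow_of_superlinear {g g' : ℝ → ℝ} {s₀ p₁ p M : ℝ}
    (hg : ∀ s, HasDerivAt g (g' s) s) (hs₀ : 0 < s₀) (hp₁ : 0 < p₁) (hp : 0 ≤ p)
    (h1 : ∀ s, s₀ < s → p₁ * (g s * s) ≤ g' s * s ^ 2)
    (h2 : ∀ s, s₀ < s → g s * s ≤ (p + 1) * ∫ t in (0 : ℝ)..s, g t)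
    (hM : ∀ s ∈ Icc 0 s₀, |g s| ≤ M) (hpos : 0 < g s₀) {s : ℝ} (hs : s₀ ≤ s) :
    |g s| ≤ (p + 1) * M / s₀ ^ p * s ^ p := by
  have hg_cont : Continuous g := continuous_iff_continuousAt.2 fun s => (hg s).continuousAt
  have hgs : 0 < g s := by
    refine pos_of_le_of_deriv_pos_of_pos hg hpos (fun t ht hgt => ?_) hs
    have ht0 : 0 < t := hs₀.trans ht
    have := h1 t ht
    nlinarith [mul_pos hp₁ (mul_pos hgt ht0), pow_pos ht0 2]
  rw [abs_of_pos hgs]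
  have hM0 : 0 ≤ M := (abs_nonneg _).trans (hM s₀ ⟨hs₀.le, le_rfl⟩)
  have hs₀p : 0 < s₀ ^ p := Real.rpow_pos_of_pos hs₀ p
  rcases hs.eq_or_lt with rfl | hlt
  · calc g s₀ ≤ M := (abs_le.1 (hM s₀ ⟨hs₀.le, le_rfl⟩)).2
      _ ≤ (p + 1) * M := by nlinarith
      _ = (p + 1) * M / s₀ ^ p * s₀ ^ p := by field_simp
  set G : ℝ → ℝ := fun s => ∫ t in (0 : ℝ)..s, g t
  have hG : ∀ s, HasDerivAt G (g s) s := fun s =>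
    intervalIntegral.integral_hasDerivAt_right (hg_cont.intervalIntegrable 0 s)
      hg_cont.aestronglyMeasurable.stronglyMeasurableAtFilter hg_cont.continuousAt
  have hGs₀ : G s₀ ≤ M * s₀ := by
    have := intervalIntegral.norm_integral_le_of_norm_le_const (a := 0) (b := s₀) (C := M) (f := g)
      fun t ht => hM t (Ioc_subset_Icc_self (uIoc_of_le hs₀.le ▸ ht))
    rw [Real.norm_eq_abs, sub_zero, abs_of_pos hs₀] at this
    exact (le_abs_self _).trans this
  have hs0 : 0 < s := hs₀.trans hlt
  have hgrowth := le_div_rpow_mul_rpow_of_deriv_mul_le hs₀ hG h2 hs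
  refine le_of_mul_le_mul_right ?_ hs0
  calc g s * s ≤ (p + 1) * G s := h2 s hlt
    _ ≤ (p + 1) * (M * s₀ / s₀ ^ (p + 1) * s ^ (p + 1)) :=
      mul_le_mul_of_nonneg_left (hgrowth.trans (by gcongr)) (by linarith)
    _ = (p + 1) * M / s₀ ^ p * s ^ p * s := by
      rw [Real.rpow_add_one hs₀.ne', Real.rpow_add_one hs0.ne']
      field_simp

theorem abs_le_or_abs_le_mul_rpow {g g' : ℝ → ℝ} {s₀ c p₁ p : ℝ}
    (hg : ∀ s, HasDerivAt g (g' s) s) (hs₀ : 0 < s₀) (hp₁ : 0 < p₁) (hp : 0 ≤ p)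
    (h1 : ∀ s, s₀ < |s| → p₁ * (g s * s) ≤ g' s * s ^ 2)
    (h2 : ∀ s, s₀ < |s| → g s * s ≤ (p + 1) * ∫ t in (0 : ℝ)..s, g t)
    (hg' : ∀ s, |s| ≤ s₀ → |g' s| ≤ c) (hg0 : |g 0| ≤ c) (hpos : 0 < g s₀) (hneg : g (-s₀) < 0)
    (s : ℝ) : |g s| ≤ c * (1 + s₀) ∨ |g s| ≤ (p + 1) * (c * (1 + s₀)) / s₀ ^ p * |s| ^ p := by
  have hc : 0 ≤ c := (abs_nonneg _).trans (hg' 0 (by simpa using hs₀.le))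
  have hsmall : ∀ s, |s| ≤ s₀ → |g s| ≤ c * (1 + s₀) := fun s hs => by
    nlinarith [abs_le_abs_add_mul_abs_of_abs_deriv_le hg hg' hs]
  rcases le_or_gt |s| s₀ with hs | hs
  · exact .inl (hsmall s hs)
  right
  rcases le_or_gt 0 s with hs0 | hs0
  · rw [abs_of_nonneg hs0] at hs ⊢
    exact abs_le_mul_rpow_of_superlinear hg hs₀ hp₁ hp (fun t ht => h1 t (ht.trans_le (le_abs_self t)))
      (fun t ht => h2 t (ht.trans_le (le_abs_self t)))
      (fun t ht => hsmall t (abs_le.2 ⟨by linarith [ht.1], ht.2⟩)) hpos hs.le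
  · rw [abs_of_neg hs0] at hs ⊢
    have hreflect : ∀ t, HasDerivAt (fun u => -g (-u)) (g' (-t)) t := fun t => by
      have := ((hg (-t)).comp t (hasDerivAt_neg t)).neg
      rwa [mul_neg_one, neg_neg] at this
    have hbound := abs_le_mul_rpow_of_superlinear (g := fun u => -g (-u)) hreflect hs₀ hp₁ hp
      (fun t ht => by
        have := h1 (-t) (by rw [abs_neg]; exact ht.trans_le (le_abs_self t))
        simp only [neg_sq] at this
        linarith)
      (fun t ht => by
        have := h2 (-t) (by rw [abs_neg]; exact ht.trans_le (le_abs_self t))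
        rw [intervalIntegral.integral_neg, intervalIntegral.integral_comp_neg (fun u => g u),
          neg_zero, intervalIntegral.integral_symm]
        linarith)
      (fun t ht => by simpa using hsmall (-t) (abs_le.2 ⟨by linarith [ht.2], by linarith [ht.1]⟩))
      (by linarith) hs.le
    simpa using hbound

theorem rpow_div_le_of_le_mul_rpow {y s K p q : ℝ} (hy : 0 ≤ y) (hs : 0 ≤ s) (hK : 0 ≤ K)
    (hp : 0 < p) (hq : 0 ≤ q) (h : y ≤ K * s ^ p) : y ^ (q / p) ≤ K ^ (q / p) * s ^ q :=
  calc y ^ (q / p) ≤ (K * s ^ p) ^ (q / p) := by gcongr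
    _ = K ^ (q / p) * s ^ q := by
      rw [Real.mul_rpow hK (Real.rpow_nonneg hs p), ← Real.rpow_mul hs, mul_div_cancel₀ _ hp.ne']

theorem abs_rpow_div_le {y s M K p q : ℝ} (hM : 0 ≤ M) (hK : 0 ≤ K) (hp : 0 < p) (hq : 0 ≤ q)
    (h : |y| ≤ M ∨ |y| ≤ K * |s| ^ p) :
    |y| ^ (q / p) ≤ (M ^ (q / p) + K ^ (q / p)) * (|s| ^ q + 1) := by
  have hMq := Real.rpow_nonneg hM (q / p)
  have hKq := Real.rpow_nonneg hK (q / p)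
  have hsq := Real.rpow_nonneg (abs_nonneg s) q
  rcases h with h | h
  · have : |y| ^ (q / p) ≤ M ^ (q / p) := by gcongr
    nlinarith
  · have := rpow_div_le_of_le_mul_rpow (abs_nonneg y) (abs_nonneg s) hK hp hq h
    nlinarith

theorem abs_rpow_add_one_div_le {y s M K p : ℝ} (hM : 0 ≤ M) (hK : 0 ≤ K) (hp : 0 < p)
    (h : |y| ≤ M ∨ |y| ≤ K * |s| ^ p) :
    |y| ^ ((p + 1) / p) ≤ (M ^ ((p + 1) / p) + K ^ (1 / p)) * (|y * s| + 1) := by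
  have hMp := Real.rpow_nonneg hM ((p + 1) / p)
  have hKp := Real.rpow_nonneg hK (1 / p)
  have hys := abs_nonneg (y * s)
  rcases h with h | h
  · have : |y| ^ ((p + 1) / p) ≤ M ^ ((p + 1) / p) := by gcongr
    nlinarith
  · have hroot := rpow_div_le_of_le_mul_rpow (abs_nonneg y) (abs_nonneg s) hK hp zero_le_one h
    have hsplit : |y| ^ ((p + 1) / p) = |y| * |y| ^ (1 / p) := by
      rw [add_div, div_self hp.ne', Real.rpow_add' (abs_nonneg y) (by positivity), Real.rpow_one]
    rw [Real.rpow_one] at hroot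
    have : |y| ^ ((p + 1) / p) ≤ K ^ (1 / p) * |y * s| := by
      rw [hsplit, abs_mul]
      nlinarith [abs_nonneg y]
    nlinarith

theorem statement13_general
    (n : ℕ) (Ω : Set (Euc n))
    (f f' : Euc n → ℝ → ℝ)
    (hderiv : ∀ x ∈ Ω, ∀ s : ℝ, HasDerivAt (f x) (f' x s) s)
    (s₀ c₁ p₁ p₂ : ℝ) (hs₀ : 0 < s₀) (hc₁ : 1 < c₁) (hp₁ : 1 < p₁) (hp₁₂ : p₁ ≤ p₂)
    (h1 : ∀ x ∈ Ω, ∀ s : ℝ, s₀ < |s| → p₁ * (f x s * s) ≤ f' x s * s ^ 2)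
    (h2 : ∀ x ∈ Ω, ∀ s : ℝ, s₀ < |s| → f x s * s ≤ (p₂ + 1) * ∫ t in (0:ℝ)..s, f x t)
    (h4a : ∀ x ∈ Ω, ∀ s : ℝ, |s| ≤ s₀ → |f' x s| ≤ c₁)
    (h4b : ∀ x ∈ Ω, |f x 0| ≤ c₁)
    (h4c : ∀ x ∈ Ω, 1 / c₁ ≤ f x s₀ ∧ 1 / c₁ ≤ -f x (-s₀))
    : (∃ C > 0, ∀ x ∈ Ω, ∀ s : ℝ,
        |f x s| ^ ((p₂ + 1) / p₂) ≤ C * (|f x s * s| + 1))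
      ∧ (∀ q : ℝ, 1 < q → ∃ Cq > 0, ∀ x ∈ Ω, ∀ s : ℝ,
        |f x s| ^ (q / p₂) ≤ Cq * (|s| ^ q + 1)) := by
  have hp₂ : 0 < p₂ := by linarith
  obtain ⟨M, rfl⟩ : ∃ M, M = c₁ * (1 + s₀) := ⟨_, rfl⟩
  obtain ⟨K, hK⟩ : ∃ K, K = (p₂ + 1) * (c₁ * (1 + s₀)) / s₀ ^ p₂ := ⟨_, rfl⟩
  have hM : 0 < c₁ * (1 + s₀) := by positivity
  have hK0 : 0 ≤ K := hK ▸ by positivity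
  have hbound : ∀ x ∈ Ω, ∀ s, |f x s| ≤ c₁ * (1 + s₀) ∨ |f x s| ≤ K * |s| ^ p₂ := by
    intro x hx
    have hinv : 0 < 1 / c₁ := by positivity
    exact hK ▸ abs_le_or_abs_le_mul_rpow (hderiv x hx) hs₀ (by linarith) hp₂.le (h1 x hx) (h2 x hx)
      (h4a x hx) (h4b x hx) (hinv.trans_le (h4c x hx).1) (by linarith [(h4c x hx).2])
  refine ⟨⟨_, add_pos_of_pos_of_nonneg (Real.rpow_pos_of_pos hM _) (Real.rpow_nonneg hK0 _),
    fun x hx s => abs_rpow_add_one_div_le hM.le hK0 hp₂ (hbound x hx s)⟩, fun q hq => ?_⟩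
  exact ⟨_, add_pos_of_pos_of_nonneg (Real.rpow_pos_of_pos hM _) (Real.rpow_nonneg hK0 _),
    fun x hx s => abs_rpow_div_le hM.le hK0 hp₂ (by linarith) (hbound x hx s)⟩

/-- Lemma 4, point 4: (i) `|f(x,s)|^{(p₂+1)/p₂} ≤ C(|f(x,s)s|+1)`, and
(ii) for each `q > 1`, `|f(x,s)|^{q/p₂} ≤ C_q(|s|^q + 1)`, for all `(x,s) ∈ Ω × ℝ`. -/
theorem statement13
    (n : ℕ) (Ω : Set (Euc n)) (hΩ : IsOpen Ω)
    (f f' : Euc n → ℝ → ℝ)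
    (hf : ContinuousOn (fun z : Euc n × ℝ => f z.1 z.2) (Ω ×ˢ (univ : Set ℝ)))
    (hf' : ContinuousOn (fun z : Euc n × ℝ => f' z.1 z.2) (Ω ×ˢ (univ : Set ℝ)))
    (hderiv : ∀ x ∈ Ω, ∀ s : ℝ, HasDerivAt (f x) (f' x s) s)
    (s₀ c₁ p₁ p₂ : ℝ) (hs₀ : 0 < s₀) (hc₁ : 1 < c₁) (hp₁ : 1 < p₁) (hp₁₂ : p₁ ≤ p₂)
    (h1 : ∀ x ∈ Ω, ∀ s : ℝ, s₀ < |s| → p₁ * (f x s * s) ≤ f' x s * s ^ 2)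
    (h2 : ∀ x ∈ Ω, ∀ s : ℝ, s₀ < |s| → f x s * s ≤ (p₂ + 1) * ∫ t in (0:ℝ)..s, f x t)
    (h4a : ∀ x ∈ Ω, ∀ s : ℝ, |s| ≤ s₀ → |f' x s| ≤ c₁)
    (h4b : ∀ x ∈ Ω, |f x 0| ≤ c₁)
    (h4c : ∀ x ∈ Ω, 1 / c₁ ≤ f x s₀ ∧ 1 / c₁ ≤ -f x (-s₀))
    : (∃ C > 0, ∀ x ∈ Ω, ∀ s : ℝ,
        |f x s| ^ ((p₂ + 1) / p₂) ≤ C * (|f x s * s| + 1))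
      ∧ (∀ q : ℝ, 1 < q → ∃ Cq > 0, ∀ x ∈ Ω, ∀ s : ℝ,
        |f x s| ^ (q / p₂) ≤ Cq * (|s| ^ q + 1)) :=
  statement13_general n Ω f f' hderiv s₀ c₁ p₁ p₂ hs₀ hc₁ hp₁ hp₁₂ h1 h2 h4a h4b h4c
end
end

section
/- Let n ≥ 2 and r ≥ 2 be integers, let Ω ⊆ ℝⁿ be open, let y ∈ ℝⁿ, and let u : Ω → ℝ be of class C^{r+1}. Then for every x ∈ Ω: D_r u(x) · D_r( z ↦ ∇u(z)·(z−y) )(x) = (1/2)·∇(|D_r u|²)(x)·(x−y) + r·|D_r u(x)|², where the middle term is the directional derivative of the function |D_r u|² in the direction x−y. -/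
/-! Write `V f z = Df(z)(z - y)` for the generator of dilations about `y`. Symmetry of second
derivatives gives `∂ᵥ (V f) = V (∂ᵥ f) + ∂ᵥ f`, hence `Δ (V f) = V (Δ f) + 2 Δ f` and, by induction,
`Δ^j (V u) = V (Δ^j u) + 2j Δ^j u`. For `r = 2j` the identity then reads
`G (V G + 2j G) = ½ V (G²) + 2j G²` with `G = Δ^j u`. For `r = 2j + 1`, taking the gradient of
`V G` produces one more copy of `∇G`, and symmetry of `D²G` gives `∇G · ∇(V G) = ½ V |∇G|² + |∇G|²`. -/

open MeasureTheory Metric Set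
open scoped BigOperators RealInnerProductSpace Topology

noncomputable section

open Filter InnerProductSpace Laplacian

section DirectionalDerivatives

variable {E F : Type*} [NormedAddCommGroup E] [NormedSpace ℝ E]
  [NormedAddCommGroup F] [NormedSpace ℝ F] {f g : E → F} {x y v : E}

def dirDeriv (v : E) (f : E → F) : E → F := fun z => fderiv ℝ f z v

def radialDeriv (y : E) (f : E → F) : E → F := fun z => fderiv ℝ f z (z - y)

lemma ContDiffAt.dirDeriv {m : WithTop ℕ∞} (hf : ContDiffAt ℝ (m + 1) f x) :
    ContDiffAt ℝ m (dirDeriv v f) x :=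
  (hf.fderiv_right le_rfl).clm_apply contDiffAt_const

lemma ContDiffAt.radialDeriv {m : WithTop ℕ∞} (hf : ContDiffAt ℝ (m + 1) f x) :
    ContDiffAt ℝ m (radialDeriv y f) x :=
  (hf.fderiv_right le_rfl).clm_apply (contDiffAt_id.sub contDiffAt_const)

lemma dirDeriv_congr (h : f =ᶠ[𝓝 x] g) : dirDeriv v f x = dirDeriv v g x := by
  simp only [dirDeriv, h.fderiv_eq]

lemma radialDeriv_congr (h : f =ᶠ[𝓝 x] g) : radialDeriv y f x = radialDeriv y g x := by
  simp only [radialDeriv, h.fderiv_eq]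

lemma fderiv_dirDeriv_apply (hf : DifferentiableAt ℝ (fderiv ℝ f) x) (w : E) :
    fderiv ℝ (dirDeriv v f) x w = fderiv ℝ (fderiv ℝ f) x w v := by
  change fderiv ℝ (fun z => fderiv ℝ f z v) x w = _
  rw [fderiv_clm_apply hf (differentiableAt_const v)]
  simp

lemma fderiv_radialDeriv_apply (hf : DifferentiableAt ℝ (fderiv ℝ f) x) (w : E) :
    fderiv ℝ (radialDeriv y f) x w = fderiv ℝ (fderiv ℝ f) x w (x - y) + fderiv ℝ f x w := by
  change fderiv ℝ (fun z => fderiv ℝ f z (z - y)) x w = _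
  rw [fderiv_clm_apply hf (differentiableAt_fun_id.sub_const y)]
  simp [fderiv_sub_const, add_comm]

lemma ContDiffAt.differentiableAt_fderiv (hf : ContDiffAt ℝ 2 f x) :
    DifferentiableAt ℝ (fderiv ℝ f) x :=
  (hf.fderiv_right (m := 1) le_rfl).differentiableAt one_ne_zero

lemma dirDeriv_radialDeriv (hf : ContDiffAt ℝ 2 f x) :
    dirDeriv v (radialDeriv y f) x = radialDeriv y (dirDeriv v f) x + dirDeriv v f x := by
  change fderiv ℝ (radialDeriv y f) x v = fderiv ℝ (dirDeriv v f) x (x - y) + fderiv ℝ f x v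
  rw [fderiv_radialDeriv_apply hf.differentiableAt_fderiv,
    fderiv_dirDeriv_apply hf.differentiableAt_fderiv, hf.isSymmSndFDerivAt (by simp) v]

lemma dirDeriv_add (hf : DifferentiableAt ℝ f x) (hg : DifferentiableAt ℝ g x) :
    dirDeriv v (f + g) x = dirDeriv v f x + dirDeriv v g x := by
  simp [dirDeriv, fderiv_add hf hg]

lemma dirDeriv_dirDeriv_radialDeriv (hf : ContDiffAt ℝ 3 f x) :
    dirDeriv v (dirDeriv v (radialDeriv y f)) x
      = radialDeriv y (dirDeriv v (dirDeriv v f)) x + (2 : ℝ) • dirDeriv v (dirDeriv v f) x := by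
  have hcomm : dirDeriv v (radialDeriv y f) =ᶠ[𝓝 x] radialDeriv y (dirDeriv v f) + dirDeriv v f := by
    filter_upwards [(hf.of_le (by norm_num) : ContDiffAt ℝ 2 f x).eventually (by simp)] with z hz
    exact dirDeriv_radialDeriv hz
  have hvf : ContDiffAt ℝ 2 (dirDeriv v f) x := hf.dirDeriv (m := 2)
  rw [dirDeriv_congr hcomm, dirDeriv_add ((hvf.radialDeriv (m := 1)).differentiableAt one_ne_zero)
    (hvf.differentiableAt two_ne_zero), dirDeriv_radialDeriv hvf, two_smul, add_assoc]

lemma radialDeriv_sum {ι : Type*} (s : Finset ι) {A : ι → E → F}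
    (hA : ∀ i ∈ s, DifferentiableAt ℝ (A i) x) :
    radialDeriv y (∑ i ∈ s, A i) x = ∑ i ∈ s, radialDeriv y (A i) x := by
  simp [radialDeriv, fderiv_sum hA]

end DirectionalDerivatives

section Laplacian

variable {E F : Type*} [NormedAddCommGroup E] [InnerProductSpace ℝ E] [FiniteDimensional ℝ E]
  [NormedAddCommGroup F] [NormedSpace ℝ F] {f : E → F} {x y : E}

lemma laplacian_eq_sum_dirDeriv {ι : Type*} [Fintype ι] (b : OrthonormalBasis ι ℝ E)
    (hf : ContDiffAt ℝ 2 f x) : Δ f x = ∑ i, dirDeriv (b i) (dirDeriv (b i) f) x := by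
  rw [laplacian_eq_iteratedFDeriv_orthonormalBasis f b]
  refine Finset.sum_congr rfl fun i _ => ?_
  rw [iteratedFDeriv_two_apply]
  exact (fderiv_dirDeriv_apply hf.differentiableAt_fderiv (b i)).symm

lemma laplacian_radialDeriv (hf : ContDiffAt ℝ 3 f x) :
    Δ (radialDeriv y f) x = radialDeriv y (Δ f) x + (2 : ℝ) • Δ f x := by
  set b := stdOrthonormalBasis ℝ E
  have hf2 : ContDiffAt ℝ 2 f x := hf.of_le (by norm_num)
  have hsum : Δ f =ᶠ[𝓝 x] ∑ i, dirDeriv (b i) (dirDeriv (b i) f) := by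
    filter_upwards [hf2.eventually (by simp)] with z hz
    simp [laplacian_eq_sum_dirDeriv b hz]
  have hdiff : ∀ i ∈ Finset.univ, DifferentiableAt ℝ (dirDeriv (b i) (dirDeriv (b i) f)) x :=
    fun i _ => ((hf.dirDeriv (m := 2)).dirDeriv (m := 1)).differentiableAt one_ne_zero
  rw [laplacian_eq_sum_dirDeriv b (hf.radialDeriv (m := 2)), radialDeriv_congr hsum,
    radialDeriv_sum _ hdiff, laplacian_eq_sum_dirDeriv b hf2, Finset.smul_sum,
    ← Finset.sum_add_distrib]
  exact Finset.sum_congr rfl fun i _ => dirDeriv_dirDeriv_radialDeriv hf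

lemma ContDiffAt.laplacian {m : WithTop ℕ∞} (hf : ContDiffAt ℝ (m + 2) f x) :
    ContDiffAt ℝ m (Δ f) x := by
  rw [laplacian_eq_iteratedFDeriv_stdOrthonormalBasis]
  exact ContDiffAt.sum fun i _ => (ContinuousMultilinearMap.apply ℝ _ F _).contDiff.comp_contDiffAt
    x (hf.iteratedFDeriv_right (i := 2) (by simp))

lemma ContDiffAt.iterate_laplacian {k : ℕ} (j : ℕ) (hf : ContDiffAt ℝ (k + 2 * j : ℕ) f x) :
    ContDiffAt ℝ k (Δ^[j] f) x := by
  induction j generalizing f with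
  | zero => simpa using hf
  | succ j ih =>
    rw [Function.iterate_succ_apply]
    apply ih
    apply ContDiffAt.laplacian
    convert hf using 1
    push_cast
    ring

lemma iterate_laplacian_radialDeriv_eventuallyEq (j : ℕ) (hf : ContDiffAt ℝ (2 * j + 1 : ℕ) f x) :
    Δ^[j] (radialDeriv y f) =ᶠ[𝓝 x] radialDeriv y (Δ^[j] f) + (2 * j : ℝ) • Δ^[j] f := by
  induction j generalizing x with
  | zero => exact .of_eq (by simp)
  | succ j ih =>
    filter_upwards [hf.eventually (ENat.natCast_ne_coe_top _)] with z hz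
    have hL : ContDiffAt ℝ 3 (Δ^[j] f) z := (hz.of_le (by norm_cast; omega)).iterate_laplacian j
    have hL2 : ContDiffAt ℝ 2 (Δ^[j] f) z := hL.of_le (by norm_num)
    have hcL2 : ContDiffAt ℝ 2 ((2 * j : ℝ) • Δ^[j] f) z := hL2.const_smul _
    have hcomm := ih (hz.of_le (by norm_cast; omega))
    rw [Function.iterate_succ_apply', Function.iterate_succ_apply',
      (laplacian_congr_nhds hcomm).eq_of_nhds, (hL.radialDeriv (m := 2)).laplacian_add hcL2,
      laplacian_smul _ hL2, laplacian_radialDeriv hL]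
    simp only [Pi.add_apply, Pi.smul_apply]
    push_cast
    module

end Laplacian

section Pohozaev

variable {E : Type*} [NormedAddCommGroup E] [InnerProductSpace ℝ E] {G u : E → ℝ} {x y : E}

lemma hasFDerivAt_gradient [CompleteSpace E] (hG : DifferentiableAt ℝ (fderiv ℝ G) x) :
    HasFDerivAt (gradient G)
      ((toDual ℝ E).symm.toContinuousLinearEquiv.toContinuousLinearMap ∘L fderiv ℝ (fderiv ℝ G) x)
      x :=
  (toDual ℝ E).symm.toContinuousLinearEquiv.hasFDerivAt.comp x hG.hasFDerivAt

lemma fderiv_inner_gradient_self_apply [CompleteSpace E] (hG : DifferentiableAt ℝ (fderiv ℝ G) x)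
    (w : E) :
    fderiv ℝ (fun z => ⟪gradient G z, gradient G z⟫) x w
      = 2 * fderiv ℝ (fderiv ℝ G) x w (gradient G x) := by
  simp_rw [real_inner_self_eq_norm_sq]
  rw [(hasFDerivAt_gradient hG).norm_sq.fderiv]
  simp only [smul_apply, ContinuousLinearMap.comp_apply, innerSL_apply_apply,
    ContinuousLinearEquiv.coe_coe, LinearIsometryEquiv.coe_toContinuousLinearEquiv]
  rw [real_inner_comm, toDual_symm_apply, two_nsmul, two_mul]

variable [FiniteDimensional ℝ E]

theorem pohozaev_identity_even (j : ℕ) (hu : ContDiffAt ℝ (2 * j + 1 : ℕ) u x) :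
    Δ^[j] u x * Δ^[j] (radialDeriv y u) x
      = 1 / 2 * fderiv ℝ (fun z => Δ^[j] u z * Δ^[j] u z) x (x - y)
        + (2 * j : ℝ) * (Δ^[j] u x * Δ^[j] u x) := by
  have hG : DifferentiableAt ℝ (Δ^[j] u) x :=
    ((hu.of_le (by norm_cast; omega)).iterate_laplacian (k := 1) j).differentiableAt one_ne_zero
  rw [(iterate_laplacian_radialDeriv_eventuallyEq j hu).eq_of_nhds, fderiv_fun_mul hG hG]
  simp only [Pi.add_apply, Pi.smul_apply, smul_eq_mul, add_apply, smul_apply, radialDeriv]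
  ring

theorem pohozaev_identity_odd (j : ℕ) (hu : ContDiffAt ℝ (2 * j + 1 + 1 : ℕ) u x) :
    ⟪gradient (Δ^[j] u) x, gradient (Δ^[j] (radialDeriv y u)) x⟫
      = 1 / 2 * fderiv ℝ (fun z => ⟪gradient (Δ^[j] u) z, gradient (Δ^[j] u) z⟫) x (x - y)
        + (2 * j + 1 : ℝ) * ⟪gradient (Δ^[j] u) x, gradient (Δ^[j] u) x⟫ := by
  have hG : ContDiffAt ℝ 2 (Δ^[j] u) x :=
    (hu.of_le (by norm_cast; omega)).iterate_laplacian (k := 2) j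
  have hcomm := iterate_laplacian_radialDeriv_eventuallyEq (y := y) j
    (hu.of_le (by norm_cast; omega))
  rw [hcomm.gradient_eq, real_inner_comm, inner_gradient_left,
    fderiv_add ((hG.radialDeriv (m := 1)).differentiableAt one_ne_zero)
      ((hG.differentiableAt two_ne_zero).const_smul _),
    fderiv_inner_gradient_self_apply hG.differentiableAt_fderiv,
    add_apply, fderiv_radialDeriv_apply hG.differentiableAt_fderiv,
    fderiv_const_smul (hG.differentiableAt two_ne_zero), smul_apply,
    hG.isSymmSndFDerivAt (by simp) (gradient _ x), smul_eq_mul, ← inner_gradient_left (f := Δ^[j] u)]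
  ring

end Pohozaev

section EuclideanSpace

variable {n : ℕ}

lemma lap_eq_laplacian (f : Euc n → ℝ) : lap n f = Δ f := by
  rw [laplacian_eq_iteratedFDeriv_orthonormalBasis f (EuclideanSpace.basisFun (Fin n) ℝ)]
  funext x
  refine Finset.sum_congr rfl fun i _ => congrArg _ ?_
  ext k
  fin_cases k <;> simp

lemma lapIter_eq_iterate_laplacian (j : ℕ) (f : Euc n → ℝ) : lapIter n j f = Δ^[j] f := by
  induction j with
  | zero => rfl
  | succ j ih => rw [Function.iterate_succ_apply', ← ih, ← lap_eq_laplacian]; rfl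

lemma drDot_two_mul (j : ℕ) (u v : Euc n → ℝ) :
    DrDot n (2 * j) u v = fun x => Δ^[j] u x * Δ^[j] v x := by
  funext x
  simp [DrDot, lapIter_eq_iterate_laplacian]

lemma drDot_two_mul_add_one (j : ℕ) (u v : Euc n → ℝ) :
    DrDot n (2 * j + 1) u v = fun x => ⟪gradient (Δ^[j] u) x, gradient (Δ^[j] v) x⟫ := by
  funext x
  simp [DrDot, lapIter_eq_iterate_laplacian, Nat.add_mod, Nat.add_div]

end EuclideanSpace

theorem statement15_general (n r : ℕ)
    (Ω : Set (Euc n)) (hΩ : IsOpen Ω) (y : Euc n)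
    (u : Euc n → ℝ) (hu : ContDiffOn ℝ ((r : ℕ∞) + 1) u Ω) :
    ∀ x ∈ Ω,
      DrDot n r u (fun z => (inner ℝ (gradient u z) (z - y) : ℝ)) x
        = (1 / 2) * fderiv ℝ (fun z => DrDot n r u u z) x (x - y)
          + (r : ℝ) * DrDot n r u u x := by
  intro x hx
  have hux : ContDiffAt ℝ (r + 1 : ℕ) u x := by exact_mod_cast hu.contDiffAt (hΩ.mem_nhds hx)
  have hVu : (fun z => ⟪gradient u z, z - y⟫) = radialDeriv y u :=
    funext fun z => inner_gradient_left
  rw [hVu]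
  obtain ⟨j, rfl | rfl⟩ := Nat.even_or_odd' r
  · rw [drDot_two_mul, drDot_two_mul]
    push_cast
    exact pohozaev_identity_even j hux
  · rw [drDot_two_mul_add_one, drDot_two_mul_add_one]
    push_cast
    exact pohozaev_identity_odd j hux

/-- The Pohozaev-type pointwise identity (21):
`D_r u · D_r(∇u·(·−y)) = ½ ∇(|D_r u|²)·(x−y) + r |D_r u|²` for `u ∈ C^{r+1}(Ω)`. -/
theorem statement15 (n r : ℕ) (hn : 2 ≤ n) (hr : 2 ≤ r)
    (Ω : Set (Euc n)) (hΩ : IsOpen Ω) (y : Euc n)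
    (u : Euc n → ℝ) (hu : ContDiffOn ℝ ((r : ℕ∞) + 1) u Ω) :
    ∀ x ∈ Ω,
      DrDot n r u (fun z => (inner ℝ (gradient u z) (z - y) : ℝ)) x
        = (1 / 2) * fderiv ℝ (fun z => DrDot n r u u z) x (x - y)
          + (r : ℝ) * DrDot n r u u x :=
  statement15_general n r Ω hΩ y u hu
end
end
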